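/- The wheel W_5, obtained by adding a universal vertex to a 5-cycle, is not anti-even-signable. -/
import Mathlib


/-- A closed walk is an induced cycle if it is a cycle and every edge of the graph between
vertices of the cycle is an edge of the cycle. -/
def IsInducedCycle {V : Type*} (G : SimpleGraph V) {v : V} (C : G.Walk v v) : Prop :=
  C.IsCycle ∧ ∀ a ∈ C.support, ∀ b ∈ C.support, G.Adj a b → s(a, b) ∈ C.edges

/-- A labelling is anti-even-balancing if every induced triangle has label-sum `0` and every
induced cycle of length at least `4` has label-sum `1` (in `ℤ/2`). -/
def AntiEvenBalancing {V : Type*} (G : SimpleGraph V) (σ : Sym2 V → ZMod 2) : Prop :=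
  ∀ (v : V) (C : G.Walk v v), IsInducedCycle G C →
    (C.edges.map σ).sum = if C.length = 3 then 0 else 1

/-- A graph is anti-even-signable if it admits an anti-even-balancing labelling. -/
def AntiEvenSignable {V : Type*} (G : SimpleGraph V) : Prop :=
  ∃ σ : Sym2 V → ZMod 2, AntiEvenBalancing G σ

/-- The wheel `W₅`: a `5`-cycle on `0,1,2,3,4` together with the universal vertex `5`. -/
def W5 : SimpleGraph (Fin 6) :=
  SimpleGraph.fromEdgeSet
    ({s(0, 1), s(1, 2), s(2, 3), s(3, 4), s(4, 0),
      s(5, 0), s(5, 1), s(5, 2), s(5, 3), s(5, 4)} : Set (Sym2 (Fin 6)))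

instance : DecidableRel W5.Adj := fun a b =>
  decidable_of_iff (s(a,b) ∈ ({s(0, 1), s(1, 2), s(2, 3), s(3, 4), s(4, 0),
      s(5, 0), s(5, 1), s(5, 2), s(5, 3), s(5, 4)} : Finset (Sym2 (Fin 6))) ∧ a ≠ b)
    (by simp [W5, SimpleGraph.fromEdgeSet_adj])

/-- Helper to build adjacency proofs in `W5` by `decide`. -/
def W5adj (a b : Fin 6) (h : W5.Adj a b := by decide) : W5.Adj a b := h

/-- The outer 5-cycle of `W5` as a closed walk. -/
def C5 : W5.Walk 0 0 :=
  .cons (W5adj 0 1) (.cons (W5adj 1 2) (.cons (W5adj 2 3)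
    (.cons (W5adj 3 4) (.cons (W5adj 4 0) .nil))))

/-- The triangle `i — j — 5 — i` of `W5` as a closed walk. -/
def Tri (i j : Fin 6) (h1 : W5.Adj i j := by decide) (h2 : W5.Adj j 5 := by decide)
    (h3 : W5.Adj 5 i := by decide) : W5.Walk i i :=
  .cons h1 (.cons h2 (.cons h3 .nil))

theorem C5_ind : IsInducedCycle W5 C5 :=
  ⟨(SimpleGraph.Walk.isCycle_def _).mpr ⟨(SimpleGraph.Walk.isTrail_def _).mpr (by decide), by simp [C5], by decide⟩,
   by decide⟩

theorem Tri01_ind : IsInducedCycle W5 (Tri 0 1) :=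
  ⟨(SimpleGraph.Walk.isCycle_def _).mpr ⟨(SimpleGraph.Walk.isTrail_def _).mpr (by decide), by simp [Tri], by decide⟩,
   by decide⟩
theorem Tri12_ind : IsInducedCycle W5 (Tri 1 2) :=
  ⟨(SimpleGraph.Walk.isCycle_def _).mpr ⟨(SimpleGraph.Walk.isTrail_def _).mpr (by decide), by simp [Tri], by decide⟩,
   by decide⟩
theorem Tri23_ind : IsInducedCycle W5 (Tri 2 3) :=
  ⟨(SimpleGraph.Walk.isCycle_def _).mpr ⟨(SimpleGraph.Walk.isTrail_def _).mpr (by decide), by simp [Tri], by decide⟩,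
   by decide⟩
theorem Tri34_ind : IsInducedCycle W5 (Tri 3 4) :=
  ⟨(SimpleGraph.Walk.isCycle_def _).mpr ⟨(SimpleGraph.Walk.isTrail_def _).mpr (by decide), by simp [Tri], by decide⟩,
   by decide⟩
theorem Tri40_ind : IsInducedCycle W5 (Tri 4 0) :=
  ⟨(SimpleGraph.Walk.isCycle_def _).mpr ⟨(SimpleGraph.Walk.isTrail_def _).mpr (by decide), by simp [Tri], by decide⟩,
   by decide⟩

theorem W5_not_antiEvenSignable : ¬ AntiEvenSignable W5 := by
  rintro ⟨σ, h⟩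
  have e5 := h 0 C5 C5_ind
  have e0 := h 0 (Tri 0 1) Tri01_ind
  have e1 := h 1 (Tri 1 2) Tri12_ind
  have e2 := h 2 (Tri 2 3) Tri23_ind
  have e3 := h 3 (Tri 3 4) Tri34_ind
  have e4 := h 4 (Tri 4 0) Tri40_ind
  simp only [C5, Tri, SimpleGraph.Walk.edges_cons, SimpleGraph.Walk.edges_nil, SimpleGraph.Walk.length_cons, SimpleGraph.Walk.length_nil,
    List.map_cons, List.map_nil, List.sum_cons, List.sum_nil, add_zero,
    reduceIte] at e5 e0 e1 e2 e3 e4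
  norm_num at e5
  have sw : ∀ a b : Fin 6, σ s(a, b) = σ s(b, a) := fun a b => by rw [Sym2.eq_swap]
  have hz : ∀ x : ZMod 2, 2 * x = 0 := fun x => by
    rw [(by decide : (2 : ZMod 2) = 0), zero_mul]
  have contra : (1 : ZMod 2) = 0 := by
    linear_combination e0 + e1 + e2 + e3 + e4 - e5
      - sw 1 5 - sw 2 5 - sw 3 5 - sw 4 5 - sw 0 5
      - hz (σ s(5, 1)) - hz (σ s(5, 2)) - hz (σ s(5, 3)) - hz (σ s(5, 4)) - hz (σ s(5, 0))
  exact one_ne_zero contra
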